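/- The function (ζ_1,…,ζ_n, ξ_1,…,ξ_n, q) ↦ det( f̃₀(ζ_{M_0},…,ζ_{M_{N−1}} | ξ_{L_0},…,ξ_{L_{N−1}}) )_{M,L} (rows and columns indexed by ordered partitions of {1,…,n} with block sizes (k_0,…,k_{N−1}), in the same fixed order) does not vanish identically: there exist nonzero complex numbers ζ_1,…,ζ_n, ξ_1,…,ξ_n and q, with z_a − q² z_b ≠ 0 and u_a − q² u_b ≠ 0 for all a ≠ b, at which this determinant is nonzero. -/

import Mathlib

open scoped BigOperators

/-- A sequence `M : Fin n → Fin N` encodes an ordered partition `(M_0,…,M_{N-1})` of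
`{1,…,n}` via `M_r = {a : M a = r}`; it has block sizes `(k_0,…,k_{N-1})` iff
`#{a : M a = r} = k r` for all `r`. -/
def hasContent {n N : ℕ} (M : Fin n → Fin N) (k : Fin N → ℕ) : Prop :=
  ∀ r : Fin N, (Finset.univ.filter fun a => M a = r).card = k r

instance {n N : ℕ} (M : Fin n → Fin N) (k : Fin N → ℕ) : Decidable (hasContent M k) := by
  unfold hasContent; infer_instance

/-- `D(ζ|ξ|q)_{M,L}` with `z_a = ζ_a^N`, `u_a = ξ_a^N`. -/
noncomputable def Dmat (N n : ℕ) (q : ℂ) (ζ ξ : Fin n → ℂ) (M L : Fin n → Fin N) : ℂ :=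
  (∏ r : Fin N, ∏ l : Fin N,
      if r < l then
        (∏ a : Fin n, ∏ b : Fin n,
            if M a = r ∧ L b = l then ζ a ^ N - q * ξ b ^ N else 1)
          * ∏ a : Fin n, ∏ b : Fin n,
              if L a = r ∧ M b = l then ξ a ^ N - q * ζ b ^ N else 1
      else 1)
    * ∑ j : Fin N,
        (∏ a : Fin n, (ζ a / ξ a) ^ (j : ℕ))
          * ∏ r : Fin N,
              if r < j then
                (∏ a : Fin n, if M a = r then (ζ a ^ N)⁻¹ else 1)
                  * ∏ a : Fin n, if L a = r then ξ a ^ N else 1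
              else 1

/-- The minimal ordered partition `M⁰` with `M⁰_r = {K_{r-1}+1,…,K_r}`, encoded as the
sequence assigning to position `a` its block. -/
def minSeq (N n : ℕ) (hN : 0 < N) (k : Fin N → ℕ) (a : Fin n) : Fin N :=
  ⟨(Finset.univ.filter fun r : Fin N => (∑ r' ∈ Finset.Iic r, k r') ≤ (a : ℕ)).card % N,
    Nat.mod_lt _ hN⟩

/-- `f̃₀(ζ|ξ)`. -/
noncomputable def ftilde0 (N n : ℕ) (hN : 0 < N) (k : Fin N → ℕ) (q : ℂ)
    (ζ ξ : Fin n → ℂ) : ℂ :=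
  (∏ a : Fin n, (ζ a / ξ a) ^ (-(((N : ℤ) - 1) * (a : ℤ))))
    * (∏ a : Fin n, (ξ a / ζ a) ^ ((minSeq N n hN k a : ℕ)))
    * (∏ a : Fin n, ∏ b : Fin n,
        if minSeq N n hN k a < minSeq N n hN k b then
          (ζ a ^ N - q * ξ b ^ N) * (ξ a ^ N - q * ζ b ^ N)
            / ((ζ a ^ N - q ^ 2 * ζ b ^ N) * (ξ a ^ N - q ^ 2 * ξ b ^ N))
        else 1)
    * ∑ i : Fin N,
        (∏ a : Fin n, (ζ a / ξ a) ^ (i : ℕ))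
          * ∏ a : Fin n,
              if (a : ℕ) < ∑ r : Fin N, (if r < i then k r else 0) then
                ξ a ^ N / ζ a ^ N
              else 1

/-- `f₁(ζ) = ∏_a ζ_a^{(N-1)(1-a)} ∏_r ∏_{a∈M⁰_r} ζ_a^{-r}`. -/
noncomputable def f1 (N n : ℕ) (hN : 0 < N) (k : Fin N → ℕ) (ζ : Fin n → ℂ) : ℂ :=
  (∏ a : Fin n, ζ a ^ (-(((N : ℤ) - 1) * (a : ℤ))))
    * ∏ a : Fin n, ζ a ^ (-((minSeq N n hN k a : ℕ) : ℤ))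

/-- `f₂(ξ) = f₁(ξ)⁻¹`. -/
noncomputable def f2 (N n : ℕ) (hN : 0 < N) (k : Fin N → ℕ) (ξ : Fin n → ℂ) : ℂ :=
  (f1 N n hN k ξ)⁻¹

section Aux
variable {n N : ℕ}

lemma hasContent_comp_perm {M : Fin n → Fin N} {k : Fin N → ℕ} (h : hasContent M k)
    (σ : Equiv.Perm (Fin n)) : hasContent (M ∘ σ) k := by
  intro r
  rw [← h r]
  apply Finset.card_bij (fun t _ => σ t)
  · intro t ht; simp only [Finset.mem_filter, Finset.mem_univ, true_and,
      Function.comp_apply] at ht ⊢; exact ht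
  · intro a _ b _ hab; exact σ.injective hab
  · intro e he
    simp only [Finset.mem_filter, Finset.mem_univ, true_and] at he
    exact ⟨σ.symm e, by simp [he], by simp⟩

lemma mem_iff_lt_card_of_downclosed (S : Finset (Fin n))
    (h : ∀ a b : Fin n, a ≤ b → b ∈ S → a ∈ S) (a : Fin n) :
    a ∈ S ↔ (a : ℕ) < S.card := by
  constructor
  · intro ha
    have hsub : Finset.Iic a ⊆ S := fun b hb => h b a (Finset.mem_Iic.1 hb) ha
    have := Finset.card_le_card hsub
    rw [Fin.card_Iic] at this
    omega
  · intro hlt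
    by_contra ha
    have hsub : S ⊆ Finset.Iio a := by
      intro b hb
      rw [Finset.mem_Iio]
      by_contra hba
      exact ha (h a b (not_lt.1 hba) hb)
    have := Finset.card_le_card hsub
    rw [Fin.card_Iio] at this
    omega

lemma card_filter_le_eq {g : Fin n → Fin N} {k : Fin N → ℕ} (h : hasContent g k) (r : Fin N) :
    (Finset.univ.filter fun t => g t ≤ r).card = ∑ r' ∈ Finset.Iic r, k r' := by
  have hset : (Finset.univ.filter fun t => g t ≤ r)
      = (Finset.Iic r).biUnion (fun r' => Finset.univ.filter fun t => g t = r') := by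
    ext t
    simp only [Finset.mem_filter, Finset.mem_univ, true_and, Finset.mem_biUnion,
      Finset.mem_Iic]
    constructor
    · intro ht; exact ⟨g t, ht, rfl⟩
    · rintro ⟨r', hr', rfl⟩; exact hr'
  rw [hset, Finset.card_biUnion]
  · exact Finset.sum_congr rfl fun r' _ => h r'
  · intro x _ y _ hxy
    rw [Function.onFun, Finset.disjoint_left]
    intro t ht ht'
    simp only [Finset.mem_filter, Finset.mem_univ, true_and] at ht ht'
    exact hxy (ht ▸ ht')

lemma monotone_le_iff {g : Fin n → Fin N} {k : Fin N → ℕ} (hg : Monotone g)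
    (h : hasContent g k) (t : Fin n) (r : Fin N) :
    g t ≤ r ↔ (t : ℕ) < ∑ r' ∈ Finset.Iic r, k r' := by
  rw [← card_filter_le_eq h r]
  have := mem_iff_lt_card_of_downclosed (Finset.univ.filter fun t => g t ≤ r)
    (fun a b hab hb => by
      simp only [Finset.mem_filter, Finset.mem_univ, true_and] at hb ⊢
      exact le_trans (hg hab) hb) t
  simpa using this

lemma minSeq_le_iff (hN : 0 < N) (k : Fin N → ℕ) (hk : ∑ r : Fin N, k r = n)
    (t : Fin n) (r : Fin N) :
    minSeq N n hN k t ≤ r ↔ (t : ℕ) < ∑ r' ∈ Finset.Iic r, k r' := by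
  set S := Finset.univ.filter fun r' : Fin N => (∑ r'' ∈ Finset.Iic r', k r'') ≤ (t : ℕ)
    with hS
  have hlastmem : (⟨N - 1, by omega⟩ : Fin N) ∉ S := by
    rw [hS]
    simp only [Finset.mem_filter, Finset.mem_univ, true_and, not_le]
    have hIic : Finset.Iic (⟨N - 1, by omega⟩ : Fin N) = Finset.univ := by
      ext r'
      simp only [Finset.mem_Iic, Finset.mem_univ, iff_true, Fin.le_def]
      omega
    rw [hIic, hk]
    exact t.isLt
  have hcard : S.card < N := by
    have hsub : S ⊆ Finset.univ.erase (⟨N - 1, by omega⟩ : Fin N) := by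
      intro x hx
      exact Finset.mem_erase.2 ⟨fun he => hlastmem (he ▸ hx), Finset.mem_univ x⟩
    have := Finset.card_le_card hsub
    rw [Finset.card_erase_of_mem (Finset.mem_univ _), Finset.card_univ,
      Fintype.card_fin] at this
    omega
  have hval : (minSeq N n hN k t : ℕ) = S.card := Nat.mod_eq_of_lt hcard
  constructor
  · intro hle
    by_contra hge
    push_neg at hge
    have hsub : Finset.Iic r ⊆ S := by
      intro r' hr'
      rw [hS]
      simp only [Finset.mem_filter, Finset.mem_univ, true_and]
      calc ∑ r'' ∈ Finset.Iic r', k r'' ≤ ∑ r'' ∈ Finset.Iic r, k r'' :=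
            Finset.sum_le_sum_of_subset (Finset.Iic_subset_Iic.2 (Finset.mem_Iic.1 hr'))
        _ ≤ (t : ℕ) := hge
    have := Finset.card_le_card hsub
    rw [Fin.card_Iic] at this
    rw [Fin.le_def, hval] at hle
    omega
  · intro hlt
    rw [Fin.le_def, hval]
    have hsub : S ⊆ Finset.Iio r := by
      intro r' hr'
      rw [hS] at hr'
      simp only [Finset.mem_filter, Finset.mem_univ, true_and] at hr'
      rw [Finset.mem_Iio]
      by_contra hge
      push_neg at hge
      have : ∑ r'' ∈ Finset.Iic r, k r'' ≤ ∑ r'' ∈ Finset.Iic r', k r'' :=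
        Finset.sum_le_sum_of_subset (Finset.Iic_subset_Iic.2 hge)
      omega
    have := Finset.card_le_card hsub
    rw [Fin.card_Iio] at this
    omega

lemma sorted_eq_minSeq (hN : 0 < N) {k : Fin N → ℕ} (hk : ∑ r : Fin N, k r = n)
    {M : Fin n → Fin N} (h : hasContent M k) :
    M ∘ (Tuple.sort M) = minSeq N n hN k := by
  have hmono := Tuple.monotone_sort M
  have hc : hasContent (M ∘ Tuple.sort M) k := hasContent_comp_perm h _
  funext t
  apply le_antisymm
  · rw [monotone_le_iff hmono hc]
    exact (minSeq_le_iff hN k hk t _).1 le_rfl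
  · rw [minSeq_le_iff hN k hk]
    exact (monotone_le_iff hmono hc t _).1 le_rfl

lemma sum_val_eq {M : Fin n → Fin N} {k : Fin N → ℕ} (h : hasContent M k) :
    ∑ e : Fin n, ((M e : ℕ)) = ∑ r : Fin N, (r : ℕ) * k r := by
  rw [← Finset.sum_fiberwise Finset.univ M fun e => ((M e : ℕ))]
  apply Finset.sum_congr rfl
  intro r _
  calc (∑ e ∈ Finset.univ.filter fun e => M e = r, ((M e : ℕ)))
      = ∑ _e ∈ Finset.univ.filter fun e => M e = r, (r : ℕ) :=
        Finset.sum_congr rfl fun e he => by rw [(Finset.mem_filter.1 he).2]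
    _ = (r : ℕ) * k r := by rw [Finset.sum_const, h r, smul_eq_mul, mul_comm]

lemma exists_flip {M L : Fin n → Fin N} {k : Fin N → ℕ} (hM : hasContent M k)
    (hL : hasContent L k) (hne : M ≠ L) : ∃ e, L e < M e := by
  by_contra h
  push_neg at h
  have hle : ∀ e ∈ Finset.univ, ((M e : ℕ)) ≤ ((L e : ℕ)) := fun e _ => h e
  have hsum : ∑ e : Fin n, ((M e : ℕ)) = ∑ e : Fin n, ((L e : ℕ)) := by
    rw [sum_val_eq hM, sum_val_eq hL]
  have heq := (Finset.sum_eq_sum_iff_of_le hle).1 hsum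
  exact hne (funext fun e => Fin.ext (heq e (Finset.mem_univ e)))

/-- Diagonal entry at `q = 1`, `ξ = ζ`: equals `N`. -/
lemma ftilde0_diag (N n : ℕ) (hp : 0 < N) (k : Fin N → ℕ) (z : Fin n → ℂ)
    (hz : ∀ a, z a ≠ 0) (hinj : ∀ a b : Fin n, z a ^ N = z b ^ N → a = b) :
    ftilde0 N n hp k 1 z z = N := by
  have e1 : ∀ a : Fin n, z a / z a = 1 := fun a => div_self (hz a)
  simp only [ftilde0]
  have F1 : (∏ a : Fin n, (z a / z a) ^ (-(((N : ℤ) - 1) * (a : ℤ)))) = 1 :=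
    Finset.prod_eq_one fun a _ => by rw [e1 a, one_zpow]
  have F2 : (∏ a : Fin n, (z a / z a) ^ ((minSeq N n hp k a : ℕ))) = 1 :=
    Finset.prod_eq_one fun a _ => by rw [e1 a, one_pow]
  have F3 : (∏ a : Fin n, ∏ b : Fin n,
      if minSeq N n hp k a < minSeq N n hp k b then
        (z a ^ N - 1 * z b ^ N) * (z a ^ N - 1 * z b ^ N)
          / ((z a ^ N - 1 ^ 2 * z b ^ N) * (z a ^ N - 1 ^ 2 * z b ^ N))
      else 1) = 1 := by
    refine Finset.prod_eq_one fun a _ => Finset.prod_eq_one fun b _ => ?_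
    split_ifs with hlt
    · have hab : a ≠ b := fun he => absurd hlt (he ▸ lt_irrefl _)
      have hy : z a ^ N - z b ^ N ≠ 0 := sub_ne_zero.2 fun hEq => hab (hinj a b hEq)
      simp only [one_pow, one_mul]
      exact div_self (mul_ne_zero hy hy)
    · rfl
  have F4 : (∑ i : Fin N,
      (∏ a : Fin n, (z a / z a) ^ (i : ℕ))
        * ∏ a : Fin n,
            if (a : ℕ) < ∑ r : Fin N, (if r < i then k r else 0) then
              z a ^ N / z a ^ N
            else 1) = N := by
    have : ∀ i : Fin N,
        (∏ a : Fin n, (z a / z a) ^ (i : ℕ))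
          * (∏ a : Fin n,
              if (a : ℕ) < ∑ r : Fin N, (if r < i then k r else 0) then
                z a ^ N / z a ^ N
              else 1) = 1 := by
      intro i
      rw [Finset.prod_eq_one fun a _ => by rw [e1 a, one_pow],
        Finset.prod_eq_one fun a _ => ?_, one_mul]
      split_ifs
      · exact div_self (pow_ne_zero _ (hz a))
      · rfl
    rw [Finset.sum_congr rfl fun i _ => this i]
    simp
  rw [F1, F2, F3, F4, one_mul, one_mul, one_mul]

/-- Off-diagonal entry at `q = 1`, `ξ = ζ`: vanishes. -/
lemma ftilde0_offdiag (N n : ℕ) (hp : 0 < N) (k : Fin N → ℕ) (hk : ∑ r : Fin N, k r = n)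
    (z : Fin n → ℂ) (M L : Fin n → Fin N) (hM : hasContent M k) (hL : hasContent L k)
    (hne : M ≠ L) :
    ftilde0 N n hp k 1 (fun t => z (Tuple.sort M t)) (fun t => z (Tuple.sort L t)) = 0 := by
  obtain ⟨e, he⟩ := exists_flip hM hL hne
  set t1 := (Tuple.sort L).symm e with ht1
  set t2 := (Tuple.sort M).symm e with ht2
  have ht1e : Tuple.sort L t1 = e := Equiv.apply_symm_apply _ _
  have ht2e : Tuple.sort M t2 = e := Equiv.apply_symm_apply _ _
  have hL' : minSeq N n hp k t1 = L e := by
    have := congrFun (sorted_eq_minSeq hp hk hL) t1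
    simp only [Function.comp_apply, ht1e] at this
    exact this.symm
  have hM' : minSeq N n hp k t2 = M e := by
    have := congrFun (sorted_eq_minSeq hp hk hM) t2
    simp only [Function.comp_apply, ht2e] at this
    exact this.symm
  have hcond : minSeq N n hp k t1 < minSeq N n hp k t2 := by
    rw [hL', hM']; exact he
  simp only [ftilde0]
  have hzero : (∏ a : Fin n, ∏ b : Fin n,
      if minSeq N n hp k a < minSeq N n hp k b then
        (z (Tuple.sort M a) ^ N - 1 * z (Tuple.sort L b) ^ N)
            * (z (Tuple.sort L a) ^ N - 1 * z (Tuple.sort M b) ^ N)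
          / ((z (Tuple.sort M a) ^ N - 1 ^ 2 * z (Tuple.sort M b) ^ N)
            * (z (Tuple.sort L a) ^ N - 1 ^ 2 * z (Tuple.sort L b) ^ N))
      else 1) = 0 := by
    apply Finset.prod_eq_zero (Finset.mem_univ t1)
    apply Finset.prod_eq_zero (Finset.mem_univ t2)
    rw [if_pos hcond]
    have hee : z (Tuple.sort L t1) = z (Tuple.sort M t2) := by rw [ht1e, ht2e]
    simp only [one_mul]
    rw [hee, sub_self, mul_zero, zero_div]
  rw [hzero, mul_zero, zero_mul]

end Aux

/-- the determinant of the matrix of extremal components `f̃₀` does not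
vanish identically: there is a choice of nonzero `ζ, ξ, q` (with the relevant
denominators nonvanishing) at which it is nonzero. -/
theorem ftilde0_det_not_identically_zero (N n : ℕ) (hN : 2 ≤ N) (hn : 1 ≤ n)
    (k : Fin N → ℕ) (hk : ∑ r : Fin N, k r = n) :
    ∃ (ζ ξ : Fin n → ℂ) (q : ℂ),
      (∀ a, ζ a ≠ 0) ∧ (∀ a, ξ a ≠ 0) ∧ q ≠ 0
      ∧ (∀ a b : Fin n, a ≠ b → ζ a ^ N - q ^ 2 * ζ b ^ N ≠ 0)
      ∧ (∀ a b : Fin n, a ≠ b → ξ a ^ N - q ^ 2 * ξ b ^ N ≠ 0)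
      ∧ Matrix.det
          (Matrix.of fun Mp Lp : {M : Fin n → Fin N // hasContent M k} =>
            ftilde0 N n (by omega) k q
              (fun t => ζ (Tuple.sort Mp.1 t)) (fun t => ξ (Tuple.sort Lp.1 t))) ≠ 0 := by
  have hN0 : 0 < N := by omega
  set ζ0 : Fin n → ℂ := fun a => ((2 ^ ((a : ℕ) + 1) : ℕ) : ℂ) with hζ0
  have hz_ne : ∀ a, ζ0 a ≠ 0 := fun a => Nat.cast_ne_zero.2 (by positivity)
  have hz_inj : ∀ a b : Fin n, ζ0 a ^ N = ζ0 b ^ N → a = b := by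
    intro a b hEq
    have hEq' : ((2 ^ ((a : ℕ) + 1) : ℕ) : ℂ) ^ N = ((2 ^ ((b : ℕ) + 1) : ℕ) : ℂ) ^ N := hEq
    have h1 : (((2 ^ ((a : ℕ) + 1)) ^ N : ℕ) : ℂ) = (((2 ^ ((b : ℕ) + 1)) ^ N : ℕ) : ℂ) := by
      push_cast
      push_cast at hEq'
      exact hEq'
    have h2 : (2 ^ ((a : ℕ) + 1)) ^ N = (2 ^ ((b : ℕ) + 1)) ^ N := Nat.cast_injective h1
    rw [← pow_mul, ← pow_mul] at h2
    have h3 := Nat.pow_right_injective (le_refl 2) h2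
    have h4 := Nat.eq_of_mul_eq_mul_right hN0 h3
    exact Fin.ext (by omega)
  refine ⟨ζ0, ζ0, 1, hz_ne, hz_ne, one_ne_zero, ?_, ?_, ?_⟩
  · intro a b hab
    rw [one_pow, one_mul]
    exact sub_ne_zero.2 fun hEq => hab (hz_inj a b hEq)
  · intro a b hab
    rw [one_pow, one_mul]
    exact sub_ne_zero.2 fun hEq => hab (hz_inj a b hEq)
  · have key : (Matrix.of fun Mp Lp : {M : Fin n → Fin N // hasContent M k} =>
        ftilde0 N n (by omega) k 1
          (fun t => ζ0 (Tuple.sort Mp.1 t)) (fun t => ζ0 (Tuple.sort Lp.1 t)))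
        = Matrix.diagonal (fun _ : {M : Fin n → Fin N // hasContent M k} => (N : ℂ)) := by
      ext Mp Lp
      rw [Matrix.of_apply]
      by_cases hML : Mp = Lp
      · subst hML
        rw [Matrix.diagonal_apply_eq]
        exact ftilde0_diag N n (by omega) k (fun t => ζ0 (Tuple.sort Mp.1 t))
          (fun t => hz_ne _) (fun a b hEq => (Tuple.sort Mp.1).injective (hz_inj _ _ hEq))
      · rw [Matrix.diagonal_apply_ne _ hML]
        exact ftilde0_offdiag N n (by omega) k hk ζ0 Mp.1 Lp.1 Mp.2 Lp.2
          fun h => hML (Subtype.ext h)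
    rw [key, Matrix.det_diagonal, Finset.prod_const]
    exact pow_ne_zero _ (Nat.cast_ne_zero.2 (by omega))
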